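/- For every k ∈ ℕ, the additive subgroup of the quotient ring ℤ[s,t]/I_k generated by the cosets of the elements m_{λ,n}(s,t)·P_λ(s,t), where n ranges over ℕ₀ and λ over B_0(n) with |λ| ≤ k, is all of ℤ[s,t]/I_k. -/

import Mathlib

open MvPolynomial

noncomputable section

abbrev Rxy : Type := MvPolynomial (Fin 2) ℤ

/-- The fraction field of ℤ[x,y]. -/
abbrev Kxy : Type := FractionRing Rxy

/-- The image of `x` in the fraction field. -/
noncomputable def xx : Kxy := algebraMap Rxy Kxy (X 0)

/-- The image of `y` in the fraction field. -/
noncomputable def yy : Kxy := algebraMap Rxy Kxy (X 1)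

/-- `s = x / y²`. -/
noncomputable def sv : Kxy := xx / yy ^ 2

/-- `t = y / x²`. -/
noncomputable def tv : Kxy := yy / xx ^ 2

/-- Evaluation of a two-variable integer polynomial at `(s, t)` in the fraction field. -/
noncomputable def evST (p : Rxy) : Kxy := aeval ![sv, tv] p

/-- Defining properties of the SU(3) character polynomials `Q a b`
(with the convention `Q a b = 0` whenever `(a, b) ∉ ℕ₀²`). -/
def IsQSU3 (Q : ℤ → ℤ → Rxy) : Prop :=
  (∀ a b : ℤ, (a < 0 ∨ b < 0) → Q a b = 0) ∧
  Q 0 0 = 1 ∧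
  Q 1 0 = X 0 ∧
  (∀ a b : ℤ, 0 ≤ a → 0 ≤ b →
    X 0 * Q a b = Q (a + 1) b + Q a (b - 1) + Q (a - 1) (b + 1)) ∧
  (∀ a b : ℤ, rename (Equiv.swap (0 : Fin 2) 1) (Q a b) = Q b a)

/-- Defining property of the polynomials `P a b` (in the variables `s, t`), namely
`P_λ(x/y², y/x²) = x^{-λ₁} y^{-λ₂} Q_λ(x,y)` in the fraction field of ℤ[x,y]
(with the convention `P a b = 0` whenever `(a, b) ∉ ℕ₀²`). -/
def IsPSU3 (Q P : ℤ → ℤ → Rxy) : Prop :=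
  (∀ a b : ℤ, (a < 0 ∨ b < 0) → P a b = 0) ∧
  (∀ a b : ℤ, 0 ≤ a → 0 ≤ b →
    evST (P a b) = algebraMap Rxy Kxy (Q a b) / (xx ^ a * yy ^ b))

/-- Membership of `p` in the set `B_j(n)` (for `j = 0, 1`). -/
def Bmem (j n : ℕ) (p : ℕ × ℕ) : Prop :=
  ((p.1 : ℤ) - j ≡ (p.2 : ℤ) [ZMOD 3]) ∧
  (p.1 : ℤ) - j + 2 * p.2 ≤ 3 * n ∧
  2 * ((p.1 : ℤ) - j) + p.2 ≤ 3 * n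

/-- Defining property of the monomials `m_{λ,n}(s,t)`: for `λ ∈ B_j(n)` (`j = 0, 1`),
`m j λ n` is the element of ℤ[s,t] corresponding to `x^{λ₁-j-n} y^{λ₂-n}` under the
change of variables `s = x/y²`, `t = y/x²`. -/
def IsMono (m : ℕ → ℕ × ℕ → ℕ → Rxy) : Prop :=
  ∀ j n (p : ℕ × ℕ), j ≤ 1 → Bmem j n p →
    evST (m j p n) = xx ^ ((p.1 : ℤ) - j - n) * yy ^ ((p.2 : ℤ) - n)

/-!
Dividing `x Q_λ = Q_{λ+(1,0)} + Q_{λ-(0,1)} + Q_{λ+(-1,1)}` by `x^{λ₁+1} y^{λ₂}`, and its mirror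
image under `x ↔ y`, gives the relations
`P_λ = P_{λ+(1,0)} + s t P_{λ-(0,1)} + t P_{λ+(-1,1)}`,
`P_λ = P_{λ+(0,1)} + s t P_{λ-(1,0)} + s P_{λ+(1,-1)}`
in `ℤ[s,t]`; they may be checked in the fraction field because `s = x/y²` and `t = y/x²` are
algebraically independent. Multiplied by `s^γ t^δ`, they move the defect `3(γ - δ) - (λ₁ - λ₂)` of
each resulting term one step towards `0`. Starting from `s^γ t^δ = s^γ t^δ P_0`, every monomial is
thus a sum of terms `s^γ t^δ P_λ` which either have defect `0`, and then are some `m_{λ,n} P_λ`, or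
lie on the wall `|λ| = k + 1`. The wall vanishes modulo `I_k`: there the two relations combine to
`t W_{j+1} = W_j - W_{j-1} + s W_{j-2}` for `W_j = P_{(k+1-j,j)}`, and together with
`W_0, P_{(k+2,0)} ∈ I_k` this forces `W_j ∈ I_k` for all `j`.
-/

theorem Ideal.eq_bot_of_le_mul_of_pow_mul_eq_bot {R : Type*} [CommSemiring R] {I J : Ideal R}
    {n : ℕ} (h : I ≤ J * I) (hn : J ^ n * I = ⊥) : I = ⊥ := by
  have key : ∀ i : ℕ, I ≤ J ^ i * I := by
    intro i
    induction i with
    | zero => simp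
    | succ i ih => exact ih.trans (by rw [pow_succ, mul_assoc]; exact Ideal.mul_mono_right h)
  exact eq_bot_iff.2 (hn ▸ key n)

section Recurrence

variable {A : Type*} [CommRing A] {s t : A} {w : ℤ → A} {n : ℕ}
  (hout : ∀ j : ℤ, j < 0 ∨ n < j → w j = 0)
  (hrec : ∀ j : ℤ, 0 ≤ j → j ≤ n → t * w (j + 1) = w j - w (j - 1) + s * w (j - 2))
include hout hrec

lemma mem_span_singleton_mul_span_range_of_recurrence (i : ℤ) :
    w i ∈ Ideal.span {t} * Ideal.span (Set.range w) := by
  induction i using Int.strongRec (m := 0) with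
  | lt i hi => simp [hout i (Or.inl hi)]
  | ge i hi ih =>
    rcases le_or_gt i n with hin | hin
    · rw [show w i = t * w (i + 1) + w (i - 1) - s * w (i - 2) by
        linear_combination -hrec i hi hin]
      have hti : t * w (i + 1) ∈ Ideal.span {t} * Ideal.span (Set.range w) :=
        Ideal.mul_mem_mul (Ideal.mem_span_singleton_self t) (Ideal.subset_span ⟨i + 1, rfl⟩)
      exact sub_mem (add_mem hti (ih _ (by omega))) (Ideal.mul_mem_left _ _ (ih _ (by omega)))
    · simp [hout i (Or.inr hin)]

lemma pow_mul_eq_zero_of_recurrence (h0 : w 0 = 0) (i : ℤ) :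
    ∀ e : ℕ, i ≤ e → t ^ e * w i = 0 := by
  induction i using Int.strongRec (m := 1) with
  | lt i hi =>
    intro e _
    rcases (show i < 0 ∨ i = 0 by omega) with hi | rfl
    · simp [hout i (Or.inl hi)]
    · simp [h0]
  | ge i hi ih =>
    intro e he
    obtain ⟨e, rfl⟩ : ∃ e', e = e' + 1 := ⟨e - 1, by omega⟩
    rcases le_or_gt i n with hin | hin
    · have hstep : t * w i = w (i - 1) - w (i - 2) + s * w (i - 3) := by
        have := hrec (i - 1) (by omega) (by omega)
        rwa [sub_add_cancel, sub_sub, sub_sub, one_add_one_eq_two,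
          show (1 : ℤ) + 2 = 3 by norm_num] at this
      rw [pow_succ, mul_assoc, hstep, mul_add, mul_sub, mul_left_comm,
        ih (i - 1) (by omega) e (by omega), ih (i - 2) (by omega) e (by omega),
        ih (i - 3) (by omega) e (by omega)]
      simp
    · simp [hout i (Or.inr hin)]

/-- Every `w j` lies in `t • span (range w)`, while `t ^ n` kills `span (range w)`. -/
theorem eq_zero_of_recurrence (h0 : w 0 = 0) (j : ℤ) : w j = 0 := by
  have hM : Ideal.span (Set.range w) = ⊥ := by
    refine Ideal.eq_bot_of_le_mul_of_pow_mul_eq_bot (J := Ideal.span {t}) (n := n) ?_ ?_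
    · exact Ideal.span_le.2 (Set.range_subset_iff.2
        (mem_span_singleton_mul_span_range_of_recurrence hout hrec))
    · rw [Ideal.span_singleton_pow, Ideal.span_mul_span', Ideal.span_eq_bot]
      rintro _ ⟨_, rfl, _, ⟨i, rfl⟩, rfl⟩
      rcases le_or_gt i n with hin | hin
      · exact pow_mul_eq_zero_of_recurrence hout hrec h0 i n hin
      · simp [hout i (Or.inr hin)]
  simpa [hM] using (Ideal.subset_span ⟨j, rfl⟩ : w j ∈ Ideal.span (Set.range w))

end Recurrence

lemma div_zpow_eq_of_mul_eq {K : Type*} [Field K] {x y : K} (hx : x ≠ 0) (hy : y ≠ 0) (a b : ℤ)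
    {A A₁ A₂ A₃ : K} (h : x * A = A₁ + A₂ + A₃) :
    A / (x ^ a * y ^ b) = A₁ / (x ^ (a + 1) * y ^ b)
      + x / y ^ 2 * (y / x ^ 2) * (A₂ / (x ^ a * y ^ (b - 1)))
      + y / x ^ 2 * (A₃ / (x ^ (a - 1) * y ^ (b + 1))) := by
  rw [zpow_add_one₀ hx, zpow_sub_one₀ hx, zpow_add_one₀ hy, zpow_sub_one₀ hy]
  have hxa : x ^ a ≠ 0 := zpow_ne_zero a hx
  have hyb : y ^ b ≠ 0 := zpow_ne_zero b hy
  field_simp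
  linear_combination h

lemma xx_ne_zero : xx ≠ 0 :=
  (map_ne_zero_iff _ (IsFractionRing.injective Rxy Kxy)).2 (X_ne_zero 0)

lemma yy_ne_zero : yy ≠ 0 :=
  (map_ne_zero_iff _ (IsFractionRing.injective Rxy Kxy)).2 (X_ne_zero 1)

@[simp] lemma evST_add (p q : Rxy) : evST (p + q) = evST p + evST q := map_add (aeval _) p q

@[simp] lemma evST_mul (p q : Rxy) : evST (p * q) = evST p * evST q := map_mul (aeval _) p q

@[simp] lemma evST_pow (p : Rxy) (n : ℕ) : evST (p ^ n) = evST p ^ n := map_pow (aeval _) p n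

@[simp] lemma evST_one : evST 1 = 1 := map_one (aeval _)

@[simp] lemma evST_X0 : evST (X 0) = sv := by simp [evST]

@[simp] lemma evST_X1 : evST (X 1) = tv := by simp [evST]

lemma sv_pow_mul_tv_pow (a b : ℕ) :
    sv ^ a * tv ^ b = xx ^ ((a : ℤ) - 2 * b) * yy ^ ((b : ℤ) - 2 * a) := by
  have hx := xx_ne_zero; have hy := yy_ne_zero
  simp only [sv, tv, div_pow, ← pow_mul, zpow_sub₀ hx, zpow_sub₀ hy]
  push_cast [zpow_natCast]
  field_simp
  norm_cast
  ring

/-- Multiplication by `(x y) ^ (2 N)` sends `s ^ a * t ^ b` to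
`x ^ (a + 2 N - 2 b) * y ^ (b + 2 N - 2 a)`; the truncated subtractions are harmless for
`a, b ≤ N`. -/
def shiftExp (N : ℕ) (μ : Fin 2 →₀ ℕ) : Fin 2 →₀ ℕ :=
  Finsupp.single 0 (μ 0 + 2 * N - 2 * μ 1) + Finsupp.single 1 (μ 1 + 2 * N - 2 * μ 0)

@[simp] lemma shiftExp_apply_zero (N : ℕ) (μ : Fin 2 →₀ ℕ) :
    shiftExp N μ 0 = μ 0 + 2 * N - 2 * μ 1 := by
  simp [shiftExp]

@[simp] lemma shiftExp_apply_one (N : ℕ) (μ : Fin 2 →₀ ℕ) :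
    shiftExp N μ 1 = μ 1 + 2 * N - 2 * μ 0 := by
  simp [shiftExp]

lemma eq_of_shiftExp_eq {N : ℕ} {μ ν : Fin 2 →₀ ℕ} (hμ : ∀ i, μ i ≤ N) (hν : ∀ i, ν i ≤ N)
    (h : shiftExp N μ = shiftExp N ν) : μ = ν := by
  have h0 := DFunLike.congr_fun h 0
  have h1 := DFunLike.congr_fun h 1
  simp only [shiftExp_apply_zero, shiftExp_apply_one] at h0 h1
  have := hμ 0; have := hμ 1; have := hν 0; have := hν 1
  ext i
  fin_cases i <;> dsimp <;> omega

lemma algebraMap_monomial_shiftExp {N : ℕ} {μ : Fin 2 →₀ ℕ} (hμ : ∀ i, μ i ≤ N) (c : ℤ) :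
    algebraMap Rxy Kxy (monomial (shiftExp N μ) c) = evST (monomial μ c) * (xx * yy) ^ (2 * N) := by
  have hsplit : ∀ z : Kxy, z ≠ 0 → ∀ a b : ℕ, b ≤ N →
      z ^ (a + 2 * N - 2 * b) = z ^ ((a : ℤ) - 2 * b) * z ^ (2 * N) := by
    intro z hz a b hb
    rw [← zpow_natCast, ← zpow_natCast z (2 * N), ← zpow_add₀ hz]
    congr 1
    omega
  simp only [monomial_eq, Finsupp.prod_pow, Fin.prod_univ_two, shiftExp_apply_zero,
    shiftExp_apply_one, map_mul, map_pow, evST_mul, evST_pow, evST_X0, evST_X1, sv_pow_mul_tv_pow]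
  rw [← xx, ← yy, hsplit xx xx_ne_zero _ _ (hμ 1), hsplit yy yy_ne_zero _ _ (hμ 0)]
  rw [show evST (C c) = algebraMap Rxy Kxy (C c) by simp [evST]]
  ring

theorem evST_injective : Function.Injective evST := by
  refine (injective_iff_map_eq_zero (aeval (R := ℤ) ![sv, tv])).2 fun p hp => ?_
  set N := p.totalDegree
  have hle : ∀ μ ∈ p.support, ∀ i, μ i ≤ N := fun μ hμ i =>
    (monomial_le_degreeOf i hμ).trans (degreeOf_le_totalDegree p i)
  have hq : ∑ μ ∈ p.support, monomial (shiftExp N μ) (coeff μ p) = 0 := by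
    apply IsFractionRing.injective Rxy Kxy
    rw [map_sum, Finset.sum_congr rfl fun μ hμ =>
      algebraMap_monomial_shiftExp (hle μ hμ) _, ← Finset.sum_mul]
    change (∑ μ ∈ p.support, aeval ![sv, tv] (monomial μ (coeff μ p))) * _ = _
    rw [← map_sum, ← as_sum, hp, zero_mul, map_zero]
  ext ν
  by_cases hν : ν ∈ p.support
  · have := congrArg (coeff (shiftExp N ν)) hq
    rwa [coeff_sum, Finset.sum_eq_single ν, coeff_monomial, if_pos rfl] at this
    · intro μ hμ hne
      rw [coeff_monomial, if_neg]
      exact fun h => hne (eq_of_shiftExp_eq (hle μ hμ) (hle ν hν) h)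
    · exact fun h => absurd hν h
  · simpa using hν

section Recurrences

variable {Q P : ℤ → ℤ → Rxy} (hQ : IsQSU3 Q) (hP : IsPSU3 Q P)
include hQ

lemma IsQSU3.y_recurrence {a b : ℤ} (ha : 0 ≤ a) (hb : 0 ≤ b) :
    X 1 * Q a b = Q a (b + 1) + Q (a - 1) b + Q (a + 1) (b - 1) := by
  have h := congrArg (rename (Equiv.swap (0 : Fin 2) 1)) (hQ.2.2.2.1 b a hb ha)
  simpa only [map_mul, map_add, rename_X, Equiv.swap_apply_left, hQ.2.2.2.2] using h

include hP

lemma IsPSU3.evST_eq (a b : ℤ) :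
    evST (P a b) = algebraMap Rxy Kxy (Q a b) / (xx ^ a * yy ^ b) := by
  by_cases hab : a < 0 ∨ b < 0
  · simp [hP.1 a b hab, hQ.1 a b hab, evST]
  · push Not at hab
    exact hP.2 a b hab.1 hab.2

lemma IsPSU3.P_zero_zero : P 0 0 = 1 := by
  apply evST_injective
  rw [hP.evST_eq hQ, hQ.2.1, evST_one]
  simp

lemma IsPSU3.x_recurrence {a b : ℤ} (ha : 0 ≤ a) (hb : 0 ≤ b) :
    P a b = P (a + 1) b + X 0 * X 1 * P a (b - 1) + X 1 * P (a - 1) (b + 1) := by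
  apply evST_injective
  simp only [evST_add, evST_mul, evST_X0, evST_X1, hP.evST_eq hQ]
  exact div_zpow_eq_of_mul_eq xx_ne_zero yy_ne_zero a b (by
    rw [xx, ← map_mul, hQ.2.2.2.1 a b ha hb, map_add, map_add])

lemma IsPSU3.y_recurrence {a b : ℤ} (ha : 0 ≤ a) (hb : 0 ≤ b) :
    P a b = P a (b + 1) + X 0 * X 1 * P (a - 1) b + X 0 * P (a + 1) (b - 1) := by
  apply evST_injective
  simp only [evST_add, evST_mul, evST_X0, evST_X1, hP.evST_eq hQ]
  have h := div_zpow_eq_of_mul_eq yy_ne_zero xx_ne_zero b a (A := algebraMap Rxy Kxy (Q a b)) (by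
    rw [yy, ← map_mul, hQ.y_recurrence ha hb, map_add, map_add])
  rw [mul_comm (xx ^ a), h, sv, tv]
  ring

end Recurrences

def idealI (P : ℤ → ℤ → Rxy) (k : ℕ) : Ideal Rxy :=
  Ideal.span ({P ((k : ℤ) + 1) 0, P ((k : ℤ) + 2) 0} : Set Rxy)

def wall (P : ℤ → ℤ → Rxy) (k : ℕ) (j : ℤ) : Rxy := P (k + 1 - j) j

section Wall

variable {Q P : ℤ → ℤ → Rxy} (hQ : IsQSU3 Q) (hP : IsPSU3 Q P) {k : ℕ}
include hQ hP

lemma IsPSU3.X1_mul_wall_succ {j : ℤ} (h1 : 1 ≤ j) (h2 : j ≤ k + 1) :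
    X 1 * wall P k (j + 1) = wall P k j - wall P k (j - 1) + X 0 * wall P k (j - 2) := by
  have E1 := hP.x_recurrence hQ (a := k + 1 - j) (b := j) (by omega) (by omega)
  have E2 := hP.y_recurrence hQ (a := k + 2 - j) (b := j - 1) (by omega) (by omega)
  simp only [wall]
  ring_nf at E1 E2 ⊢
  linear_combination E2 - E1

lemma IsPSU3.X1_mul_wall_one : X 1 * wall P k 1 = wall P k 0 - P (k + 2) 0 := by
  have E := hP.x_recurrence hQ (a := k + 1) (b := 0) (by omega) le_rfl
  rw [hP.1 _ (0 - 1) (Or.inr (by norm_num))] at E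
  simp only [wall]
  ring_nf at E ⊢
  linear_combination -E

theorem IsPSU3.P_mem_idealI_of_add_eq {c d : ℤ} (hcd : c + d = k + 1) : P c d ∈ idealI P k := by
  have hout : ∀ j : ℤ, j < 0 ∨ (k + 1 : ℕ) < j → wall P k j = 0 := by
    rintro j (hj | hj) <;> exact hP.1 _ _ (by omega)
  have hmem1 : P ((k : ℤ) + 1) 0 ∈ idealI P k := Ideal.subset_span (by simp)
  have hmem2 : P ((k : ℤ) + 2) 0 ∈ idealI P k := Ideal.subset_span (by simp)
  rw [show c = k + 1 - d by omega, ← Ideal.Quotient.eq_zero_iff_mem]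
  refine eq_zero_of_recurrence (w := fun j => Ideal.Quotient.mk (idealI P k) (wall P k j))
    (s := Ideal.Quotient.mk _ (X 0)) (t := Ideal.Quotient.mk _ (X 1)) (n := k + 1)
    (fun j hj => by simp [hout j hj]) (fun j hj0 hjn => ?_) ?_ d
  · simp only [← map_mul, ← map_sub, ← map_add]
    rcases hj0.lt_or_eq with hj | rfl
    · rw [hP.X1_mul_wall_succ hQ hj (by exact_mod_cast hjn)]
    · rw [zero_add, hP.X1_mul_wall_one hQ, hout (0 - 1) (by omega), hout (0 - 2) (by omega),
        Ideal.Quotient.eq]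
      simpa using hmem2
  · simpa [wall, Ideal.Quotient.eq_zero_iff_mem] using hmem1

end Wall

def genSet (P : ℤ → ℤ → Rxy) (m : ℕ → ℕ × ℕ → ℕ → Rxy) (k : ℕ) : Set (Rxy ⧸ idealI P k) :=
  {z | ∃ (n : ℕ) (p : ℕ × ℕ), Bmem 0 n p ∧ p.1 + p.2 ≤ k ∧
    z = Ideal.Quotient.mk (idealI P k) (m 0 p n * P (p.1 : ℤ) (p.2 : ℤ))}

lemma IsMono.eq_X0_pow_mul_X1_pow {m : ℕ → ℕ × ℕ → ℕ → Rxy} (hm : IsMono m) {γ δ c d n : ℕ}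
    (hn : Bmem 0 n (c, d)) (hγ : (γ : ℤ) = c - n + 2 * δ) (hδ : (δ : ℤ) = d - n + 2 * γ) :
    m 0 (c, d) n = X 0 ^ γ * X 1 ^ δ := by
  apply evST_injective
  rw [hm 0 n (c, d) zero_le_one hn, evST_mul, evST_pow, evST_pow, evST_X0, evST_X1,
    sv_pow_mul_tv_pow]
  congr 2 <;> omega

lemma mk_monomial_mul_P_mem_genSet {P : ℤ → ℤ → Rxy} {m : ℕ → ℕ × ℕ → ℕ → Rxy} (hm : IsMono m)
    {k γ δ : ℕ} {c d : ℤ} (hc : 0 ≤ c) (hd : 0 ≤ d) (hcd : c + d ≤ k)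
    (h : 3 * ((γ : ℤ) - δ) = c - d) :
    Ideal.Quotient.mk (idealI P k) (X 0 ^ γ * X 1 ^ δ * P c d) ∈ genSet P m k := by
  lift c to ℕ using hc
  lift d to ℕ using hd
  -- `n` is read off from `x ^ (c - n) = x ^ (γ - 2 δ)`
  obtain ⟨n, hn⟩ : ∃ n : ℕ, (n : ℤ) = c + 2 * δ - γ := ⟨(c + 2 * δ - γ : ℤ).toNat, by omega⟩
  have hB : Bmem 0 n (c, d) := by
    refine ⟨Int.modEq_iff_dvd.2 ⟨δ - γ, ?_⟩, ?_, ?_⟩ <;>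
      simp only [Nat.cast_zero, sub_zero] <;> omega
  refine ⟨n, (c, d), hB, by exact_mod_cast hcd, ?_⟩
  rw [hm.eq_X0_pow_mul_X1_pow (γ := γ) (δ := δ) hB (by omega) (by omega)]

section Descent

variable {Q P : ℤ → ℤ → Rxy} {m : ℕ → ℕ × ℕ → ℕ → Rxy} (hQ : IsQSU3 Q) (hP : IsPSU3 Q P)
  (hm : IsMono m) {k : ℕ}
include hQ hP hm

theorem mk_monomial_mul_P_mem_closure (γ δ : ℕ) (c d : ℤ) (hcd : c + d ≤ k + 1) :
    Ideal.Quotient.mk (idealI P k) (X 0 ^ γ * X 1 ^ δ * P c d) ∈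
      AddSubgroup.closure (genSet P m k) := by
  by_cases hneg : c < 0 ∨ d < 0
  · simp [hP.1 c d hneg]
  push Not at hneg
  obtain ⟨hc, hd⟩ := hneg
  rcases hcd.lt_or_eq with hcd | hwall
  swap
  · rw [Ideal.Quotient.eq_zero_iff_mem.2
      (Ideal.mul_mem_left _ _ (hP.P_mem_idealI_of_add_eq hQ hwall))]
    exact zero_mem _
  rcases lt_trichotomy (3 * ((γ : ℤ) - δ)) (c - d) with hμ | hμ | hμ
  · rw [show X 0 ^ γ * X 1 ^ δ * P c d = X 0 ^ γ * X 1 ^ δ * P c (d + 1)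
        + X 0 ^ (γ + 1) * X 1 ^ (δ + 1) * P (c - 1) d
        + X 0 ^ (γ + 1) * X 1 ^ δ * P (c + 1) (d - 1) by
      linear_combination (X 0 ^ γ * X 1 ^ δ : Rxy) * hP.y_recurrence hQ hc hd, map_add, map_add]
    exact add_mem (add_mem (mk_monomial_mul_P_mem_closure γ δ c (d + 1) (by omega))
      (mk_monomial_mul_P_mem_closure (γ + 1) (δ + 1) (c - 1) d (by omega)))
      (mk_monomial_mul_P_mem_closure (γ + 1) δ (c + 1) (d - 1) (by omega))
  · exact AddSubgroup.subset_closure (mk_monomial_mul_P_mem_genSet hm hc hd (by omega) hμ)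
  · rw [show X 0 ^ γ * X 1 ^ δ * P c d = X 0 ^ γ * X 1 ^ δ * P (c + 1) d
        + X 0 ^ (γ + 1) * X 1 ^ (δ + 1) * P c (d - 1)
        + X 0 ^ γ * X 1 ^ (δ + 1) * P (c - 1) (d + 1) by
      linear_combination (X 0 ^ γ * X 1 ^ δ : Rxy) * hP.x_recurrence hQ hc hd, map_add, map_add]
    exact add_mem (add_mem (mk_monomial_mul_P_mem_closure γ δ (c + 1) d (by omega))
      (mk_monomial_mul_P_mem_closure (γ + 1) (δ + 1) c (d - 1) (by omega)))
      (mk_monomial_mul_P_mem_closure γ (δ + 1) (c - 1) (d + 1) (by omega))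
termination_by (3 * ((γ : ℤ) - δ) - (c - d)).natAbs
decreasing_by all_goals omega

end Descent

theorem stmt_9_general (Q P : ℤ → ℤ → Rxy) (hQ : IsQSU3 Q) (hP : IsPSU3 Q P)
    (m : ℕ → ℕ × ℕ → ℕ → Rxy) (hm : IsMono m)
    (k : ℕ) :
    AddSubgroup.closure
      {z : Rxy ⧸ (Ideal.span ({P ((k : ℤ) + 1) 0, P ((k : ℤ) + 2) 0} : Set Rxy)) |
        ∃ (n : ℕ) (p : ℕ × ℕ), Bmem 0 n p ∧ p.1 + p.2 ≤ k ∧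
          z = Ideal.Quotient.mk (Ideal.span ({P ((k : ℤ) + 1) 0, P ((k : ℤ) + 2) 0} : Set Rxy))
                (m 0 p n * P (p.1 : ℤ) (p.2 : ℤ))} = ⊤ := by
  rw [eq_top_iff]
  rintro z -
  obtain ⟨f, rfl⟩ := Ideal.Quotient.mk_surjective z
  change Ideal.Quotient.mk (idealI P k) f ∈ AddSubgroup.closure (genSet P m k)
  induction f using MvPolynomial.induction_on' with
  | monomial μ a =>
    have h := mk_monomial_mul_P_mem_closure hQ hP hm (k := k) (μ 0) (μ 1) 0 0 (by omega)
    rw [hP.P_zero_zero hQ, mul_one] at h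
    convert zsmul_mem h a using 1
    rw [← map_zsmul, monomial_eq, Finsupp.prod_pow, Fin.prod_univ_two, ← smul_eq_C_mul]
  | add p q hp hq => rw [map_add]; exact add_mem hp hq

theorem stmt_9 (Q P : ℤ → ℤ → Rxy) (hQ : IsQSU3 Q) (hP : IsPSU3 Q P)
    (m : ℕ → ℕ × ℕ → ℕ → Rxy) (hm : IsMono m)
    (k : ℕ) (hk : 1 ≤ k) :
    AddSubgroup.closure
      {z : Rxy ⧸ (Ideal.span ({P ((k : ℤ) + 1) 0, P ((k : ℤ) + 2) 0} : Set Rxy)) |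
        ∃ (n : ℕ) (p : ℕ × ℕ), Bmem 0 n p ∧ p.1 + p.2 ≤ k ∧
          z = Ideal.Quotient.mk (Ideal.span ({P ((k : ℤ) + 1) 0, P ((k : ℤ) + 2) 0} : Set Rxy))
                (m 0 p n * P (p.1 : ℤ) (p.2 : ℤ))} = ⊤ :=
  stmt_9_general Q P hQ hP m hm k
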